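/- arXiv:2310.06944 — 4 statements merged into one kernel-verified Lean document; each statement's English description precedes it below -/
import Mathlib

section
/- Let V be a hypervector space over K and (G,B) a bipolar fuzzy soft set of V. Then (G,B) is a bipolar fuzzy soft hypervector space of V if and only if the following three conditions hold for all e ∈ B, x ∈ V and b ∈ K: (1) (G+G)_e^+(x) ≤ G_e^+(x) and (G+G)_e^-(x) ≥ G_e^-(x); (2) G_e^+(−x) ≤ G_e^+(x) and G_e^-(−x) ≥ G_e^-(x); (3) (b∘G)_e^+(x) ≤ G_e^+(x) and (b∘G)_e^-(x) ≥ G_e^-(x). -/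
open Set Classical

variable {K V E : Type*}

/-- A hypervector space (Scafati-Tallini): an abelian group `V` over a field `K`
with an external hyperoperation satisfying (H1)-(H5). -/
structure HVS (K V : Type*) [Field K] [AddCommGroup V] where
  ho : K → V → Set V
  ho_nonempty : ∀ b y, (ho b y).Nonempty
  h1 : ∀ b (y z : V), ho b (y + z) ⊆ Set.image2 (· + ·) (ho b y) (ho b z)
  h2 : ∀ (b c : K) (y : V), ho (b + c) y ⊆ Set.image2 (· + ·) (ho b y) (ho c y)
  h3 : ∀ (b c : K) (y : V), (⋃ p ∈ ho c y, ho b p) = ho (b * c) y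
  h4a : ∀ (b : K) (y : V), ho b (-y) = ho (-b) y
  h4b : ∀ (b : K) (y : V), ho (-b) y = -(ho b y)
  h5 : ∀ y : V, y ∈ ho 1 y

/-- `(Gp, Gm)` is a bipolar fuzzy soft set: `Gp e : V → [0,1]`, `Gm e : V → [-1,0]`. -/
def IsBFS (Gp Gm : E → V → ℝ) : Prop :=
  ∀ e x, Gp e x ∈ Set.Icc (0:ℝ) 1 ∧ Gm e x ∈ Set.Icc (-1:ℝ) 0

/-- Bipolar fuzzy soft hypervector space. -/
def IsBFSHVS [Field K] [AddCommGroup V] (H : HVS K V) (Gp Gm : E → V → ℝ) : Prop :=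
  (∀ e (y z : V), min (Gp e y) (Gp e z) ≤ Gp e (y - z)) ∧
  (∀ e (y z : V), Gm e (y - z) ≤ max (Gm e y) (Gm e z)) ∧
  (∀ e (b : K) (y : V), Gp e y ≤ sInf (Gp e '' H.ho b y)) ∧
  (∀ e (b : K) (y : V), sSup (Gm e '' H.ho b y) ≤ Gm e y)

/-- Positive part of the sum of two bipolar fuzzy soft sets. -/
noncomputable def sumP [AddCommGroup V] (Fp Hp : E → V → ℝ) (e : E) (x : V) : ℝ :=
  sSup {t | ∃ y z : V, y + z = x ∧ t = min (Fp e y) (Hp e z)}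

/-- Negative part of the sum of two bipolar fuzzy soft sets. -/
noncomputable def sumM [AddCommGroup V] (Fm Hm : E → V → ℝ) (e : E) (x : V) : ℝ :=
  sInf {t | ∃ y z : V, y + z = x ∧ t = max (Fm e y) (Hm e z)}

/-- Positive part of the scalar product `b ∘ G` (real `sSup` gives `0` on the empty set). -/
noncomputable def smulP [Field K] [AddCommGroup V] (H : HVS K V) (b : K)
    (Gp : E → V → ℝ) (e : E) (x : V) : ℝ :=
  sSup {t | ∃ r : V, x ∈ H.ho b r ∧ t = Gp e r}

/-- Negative part of the scalar product `b ∘ G` (real `sInf` gives `0` on the empty set). -/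
noncomputable def smulM [Field K] [AddCommGroup V] (H : HVS K V) (b : K)
    (Gm : E → V → ℝ) (e : E) (x : V) : ℝ :=
  sInf {t | ∃ r : V, x ∈ H.ho b r ∧ t = Gm e r}

/-- Closure conditions of a subhyperspace (the empty set vacuously satisfies them). -/
def IsSHS [Field K] [AddCommGroup V] (H : HVS K V) (W : Set V) : Prop :=
  (∀ x ∈ W, ∀ y ∈ W, x - y ∈ W) ∧ ∀ x ∈ W, ∀ b : K, H.ho b x ⊆ W

/-!
Replacing `Gm` by `-Gm` turns the negative part into a second `[0, 1]`-valued fuzzy soft set, and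
`sumM`, `smulM` into `-sumP`, `-smulP`, so only the positive part needs an argument. There,
closure under `y - z` amounts to closure under `y + z`, which is `sumP G G ≤ G`, together with
`G (-x) ≤ G x`; and `G y ≤ inf G (b ∘ y)` says `G r ≤ G x` whenever `x ∈ b ∘ r`, which is
`smulP H b G ≤ G`.
-/

theorem min_le_apply_sub_iff {G α : Type*} [AddGroup G] [LinearOrder α] (f : G → α) :
    (∀ y z, min (f y) (f z) ≤ f (y - z)) ↔
      (∀ y z, min (f y) (f z) ≤ f (y + z)) ∧ ∀ x, f (-x) ≤ f x := by
  constructor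
  · intro h
    have h_le_zero x : f x ≤ f 0 := by simpa using h x x
    have h_le_neg x : f x ≤ f (-x) := by
      simpa [min_eq_right (h_le_zero x)] using h 0 x
    refine ⟨fun y z => ?_, fun x => by simpa using h_le_neg (-x)⟩
    calc min (f y) (f z) ≤ min (f y) (f (-z)) := min_le_min_left _ (h_le_neg z)
      _ ≤ f (y + z) := by simpa using h y (-z)
  · rintro ⟨h_add, h_neg⟩ y z
    calc min (f y) (f z) ≤ min (f y) (f (-z)) := by simpa using min_le_min_left _ (h_neg (-z))
      _ ≤ f (y - z) := by simpa [sub_eq_add_neg] using h_add y (-z)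

theorem le_sInf_image_iff {α β : Type*} [ConditionallyCompleteLattice β] {f : α → β}
    {S : Set α} {c : β}
    (hf : BddBelow (range f)) (hS : S.Nonempty) :
    c ≤ sInf (f '' S) ↔ ∀ s ∈ S, c ≤ f s := by
  rw [le_csInf_iff (hf.mono (image_subset_range f S)) (hS.image f), forall_mem_image]

theorem sInf_image_neg {α : Type*} (f : α → ℝ) (S : Set α) :
    sInf ((fun a => -f a) '' S) = -sSup (f '' S) := by
  rw [← Real.sInf_neg, ← image_neg_eq_neg, image_image]

section Sum

variable [AddCommGroup V]

theorem sumP_le_iff {Fp Hp : E → V → ℝ} {e : E} {x : V} {c : ℝ}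
    (hF : BddAbove (range (Fp e))) :
    sumP Fp Hp e x ≤ c ↔ ∀ y z, y + z = x → min (Fp e y) (Hp e z) ≤ c := by
  obtain ⟨M, hM⟩ := hF
  rw [sumP, csSup_le_iff]
  · exact ⟨fun h y z hyz => h _ ⟨y, z, hyz, rfl⟩, fun h _ ⟨y, z, hyz, ht⟩ => ht ▸ h y z hyz⟩
  · refine ⟨M, ?_⟩
    rintro _ ⟨y, z, -, rfl⟩
    exact (min_le_left _ _).trans (hM (mem_range_self y))
  · exact ⟨_, x, 0, add_zero x, rfl⟩

theorem sumP_le_self_iff {F : E → V → ℝ} {e : E} (hF : BddAbove (range (F e))) :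
    (∀ x, sumP F F e x ≤ F e x) ↔ ∀ y z, min (F e y) (F e z) ≤ F e (y + z) := by
  simp only [sumP_le_iff hF]
  exact ⟨fun h y z => h _ y z rfl, fun h x y z hx => hx ▸ h y z⟩

theorem sumP_neg (Fm Hm : E → V → ℝ) (e : E) (x : V) :
    sumP (-Fm) (-Hm) e x = -sumM Fm Hm e x := by
  rw [sumP, sumM, ← Real.sSup_neg]
  congr 1
  ext t
  simp [neg_eq_iff_eq_neg, min_neg_neg]

end Sum

section Scalar

variable [Field K] [AddCommGroup V] (H : HVS K V)

theorem smulP_le_iff {F : E → V → ℝ} {b : K} {e : E} {x : V} {c : ℝ}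
    (hF : BddAbove (range (F e))) (hc : 0 ≤ c) :
    smulP H b F e x ≤ c ↔ ∀ r, x ∈ H.ho b r → F e r ≤ c := by
  rw [smulP]
  have hbdd : BddAbove {t | ∃ r, x ∈ H.ho b r ∧ t = F e r} :=
    hF.mono (by rintro _ ⟨r, -, rfl⟩; exact mem_range_self r)
  refine ⟨fun h r hr => (le_csSup hbdd ⟨r, hr, rfl⟩).trans h, fun h => ?_⟩
  exact Real.sSup_le (by rintro _ ⟨r, hr, rfl⟩; exact h r hr) hc

theorem le_sInf_image_ho_iff_smulP_le {F : E → V → ℝ} {e : E} (h0 : 0 ≤ F e)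
    (hF : BddAbove (range (F e))) :
    (∀ b y, F e y ≤ sInf (F e '' H.ho b y)) ↔ ∀ b x, smulP H b F e x ≤ F e x := by
  have hF' : BddBelow (range (F e)) := ⟨0, forall_mem_range.2 h0⟩
  simp only [le_sInf_image_iff hF' (H.ho_nonempty _ _), smulP_le_iff H hF (h0 _)]
  exact forall_congr' fun _ => forall_comm

theorem smulP_neg (b : K) (Gm : E → V → ℝ) (e : E) (x : V) :
    smulP H b (-Gm) e x = -smulM H b Gm e x := by
  rw [smulP, smulM, ← Real.sSup_neg]
  congr 1
  ext t
  simp [neg_eq_iff_eq_neg]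

end Scalar

def IsFSHVS [Field K] [AddCommGroup V] (H : HVS K V) (F : E → V → ℝ) : Prop :=
  (∀ e (y z : V), min (F e y) (F e z) ≤ F e (y - z)) ∧
  ∀ e (b : K) (y : V), F e y ≤ sInf (F e '' H.ho b y)

theorem isBFSHVS_iff [Field K] [AddCommGroup V] (H : HVS K V) (Gp Gm : E → V → ℝ) :
    IsBFSHVS H Gp Gm ↔ IsFSHVS H Gp ∧ IsFSHVS H (-Gm) := by
  simp only [IsBFSHVS, IsFSHVS, Pi.neg_apply, min_neg_neg, sInf_image_neg, neg_le_neg_iff]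
  tauto

theorem isFSHVS_iff [Field K] [AddCommGroup V] (H : HVS K V) {F : E → V → ℝ} (h0 : 0 ≤ F)
    (hF : ∀ e, BddAbove (range (F e))) :
    IsFSHVS H F ↔ (∀ e x, sumP F F e x ≤ F e x) ∧ (∀ e x, F e (-x) ≤ F e x) ∧
      ∀ b e x, smulP H b F e x ≤ F e x := by
  simp only [IsFSHVS, min_le_apply_sub_iff, ← sumP_le_self_iff (hF _), forall_and,
    le_sInf_image_ho_iff_smulP_le H (h0 _) (hF _), and_assoc]
  exact and_congr_right' (and_congr_right' forall_comm)

theorem stmt_3 [Field K] [AddCommGroup V] (H : HVS K V) (Gp Gm : E → V → ℝ)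
    (hb : IsBFS Gp Gm) :
    IsBFSHVS H Gp Gm ↔
      ((∀ (e : E) (x : V), sumP Gp Gp e x ≤ Gp e x ∧ Gm e x ≤ sumM Gm Gm e x) ∧
       (∀ (e : E) (x : V), Gp e (-x) ≤ Gp e x ∧ Gm e x ≤ Gm e (-x)) ∧
       (∀ (b : K) (e : E) (x : V), smulP H b Gp e x ≤ Gp e x ∧ Gm e x ≤ smulM H b Gm e x)) := by
  have hGp0 : 0 ≤ Gp := fun e x => (hb e x).1.1
  have hGm0 : 0 ≤ -Gm := fun e x => neg_nonneg.2 (hb e x).2.2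
  have hGp1 e : BddAbove (range (Gp e)) := ⟨1, forall_mem_range.2 fun x => (hb e x).1.2⟩
  have hGm1 e : BddAbove (range ((-Gm) e)) :=
    ⟨1, forall_mem_range.2 fun x => neg_le.1 (hb e x).2.1⟩
  rw [isBFSHVS_iff, isFSHVS_iff H hGp0 hGp1, isFSHVS_iff H hGm0 hGm1]
  simp only [sumP_neg, smulP_neg, Pi.neg_apply, neg_le_neg_iff, forall_and]
  tauto
end

section
/- Let V be an invertible hypervector space over K (i.e., for all nonzero b ∈ K, x ∈ b∘y implies y ∈ b⁻¹∘x). If (G,B) is a bipolar fuzzy soft hypervector space of V, then for all e ∈ B, y ∈ V and nonzero b ∈ K: (b∘G)_e^+(y) ≥ G_e^+(y) and (b∘G)_e^-(y) ≤ G_e^-(y). -/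
/-!
For `b ≠ 0`, invertibility turns any `x ∈ b⁻¹ ∘ y` (which exists since hyperproducts are
nonempty) into a point with `y ∈ b ∘ x`. The hvs axiom for `b⁻¹` gives `G⁺(y) ≤ G⁺(x)` and
`G⁻(x) ≤ G⁻(y)`, while `x` is one of the `r` over which the sup and inf defining `(b ∘ G)(y)`
are taken; the bounds `[0,1]` and `[-1,0]` make those real sups and infs genuine.
-/

open Set Classical

variable {K V E : Type*}

namespace HVS

theorem exists_mem_ho_inv_of_invertible [Field K] [AddCommGroup V] (H : HVS K V)
    (hinv : ∀ b : K, b ≠ 0 → ∀ x y : V, x ∈ H.ho b y → y ∈ H.ho b⁻¹ x)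
    {b : K} (hb : b ≠ 0) (y : V) : ∃ x ∈ H.ho b⁻¹ y, y ∈ H.ho b x := by
  obtain ⟨x, hx⟩ := H.ho_nonempty b⁻¹ y
  refine ⟨x, hx, ?_⟩
  simpa only [inv_inv] using hinv b⁻¹ (inv_ne_zero hb) x y hx

end HVS

namespace IsBFS

variable {Gp Gm : E → V → ℝ}

theorem bddBelow_range_pos (hG : IsBFS Gp Gm) (e : E) : BddBelow (range (Gp e)) :=
  ⟨0, forall_mem_range.2 fun x => (hG e x).1.1⟩

theorem bddAbove_range_pos (hG : IsBFS Gp Gm) (e : E) : BddAbove (range (Gp e)) :=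
  ⟨1, forall_mem_range.2 fun x => (hG e x).1.2⟩

theorem bddBelow_range_neg (hG : IsBFS Gp Gm) (e : E) : BddBelow (range (Gm e)) :=
  ⟨-1, forall_mem_range.2 fun x => (hG e x).2.1⟩

theorem bddAbove_range_neg (hG : IsBFS Gp Gm) (e : E) : BddAbove (range (Gm e)) :=
  ⟨0, forall_mem_range.2 fun x => (hG e x).2.2⟩

end IsBFS

section ScalarProduct

variable [Field K] [AddCommGroup V] {H : HVS K V} {Gp Gm : E → V → ℝ} {e : E} {b : K} {x y : V}

theorem IsBFSHVS.pos_le_of_mem_ho (h : IsBFSHVS H Gp Gm) (hbdd : BddBelow (range (Gp e)))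
    (hx : x ∈ H.ho b y) : Gp e y ≤ Gp e x :=
  (h.2.2.1 e b y).trans (csInf_le (hbdd.mono (image_subset_range _ _)) (mem_image_of_mem _ hx))

theorem IsBFSHVS.neg_le_of_mem_ho (h : IsBFSHVS H Gp Gm) (hbdd : BddAbove (range (Gm e)))
    (hx : x ∈ H.ho b y) : Gm e x ≤ Gm e y :=
  (le_csSup (hbdd.mono (image_subset_range _ _)) (mem_image_of_mem _ hx)).trans (h.2.2.2 e b y)

theorem le_smulP (hbdd : BddAbove (range (Gp e))) (hy : y ∈ H.ho b x) :
    Gp e x ≤ smulP H b Gp e y :=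
  le_csSup (hbdd.mono fun _ ⟨r, _, ht⟩ => mem_range.2 ⟨r, ht.symm⟩) ⟨x, hy, rfl⟩

theorem smulM_le (hbdd : BddBelow (range (Gm e))) (hy : y ∈ H.ho b x) :
    smulM H b Gm e y ≤ Gm e x :=
  csInf_le (hbdd.mono fun _ ⟨r, _, ht⟩ => mem_range.2 ⟨r, ht.symm⟩) ⟨x, hy, rfl⟩

end ScalarProduct

theorem stmt_4 [Field K] [AddCommGroup V] (H : HVS K V)
    (hinv : ∀ b : K, b ≠ 0 → ∀ x y : V, x ∈ H.ho b y → y ∈ H.ho b⁻¹ x)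
    (Gp Gm : E → V → ℝ) (hb : IsBFS Gp Gm) (h : IsBFSHVS H Gp Gm) :
    ∀ (e : E) (y : V) (b : K), b ≠ 0 →
      Gp e y ≤ smulP H b Gp e y ∧ smulM H b Gm e y ≤ Gm e y := by
  intro e y b hb0
  obtain ⟨x, hx, hyx⟩ := H.exists_mem_ho_inv_of_invertible hinv hb0 y
  exact ⟨(h.pos_le_of_mem_ho (hb.bddBelow_range_pos e) hx).trans
      (le_smulP (hb.bddAbove_range_pos e) hyx),
    (smulM_le (hb.bddBelow_range_neg e) hyx).trans
      (h.neg_le_of_mem_ho (hb.bddAbove_range_neg e) hx)⟩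
end

section
/- Let V be a strongly left distributive hypervector space over K and (G,B) a bipolar fuzzy soft set of V. Then (G,B) is a bipolar fuzzy soft hypervector space of V if and only if for all e ∈ B, x,y ∈ V and a,b ∈ K: inf_{t ∈ a∘x + b∘y} G_e^+(t) ≥ min(G_e^+(x), G_e^+(y)) and sup_{t ∈ a∘x + b∘y} G_e^-(t) ≤ max(G_e^-(x), G_e^-(y)), where a∘x + b∘y = {t₁ + t₂ : t₁ ∈ a∘x, t₂ ∈ b∘y}. -/
open Set Classical

variable {K V E : Type*}

/-
The two polarities are one statement: the negative part is the positive part read in the order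
dual of `ℝ`, so it suffices to treat a single function `f` that is bounded below. Forward: for
`u ∈ a ∘ x` and `v ∈ b ∘ y` we have `-v ∈ (-b) ∘ y`, hence
`f (u + v) = f (u - -v) ≥ min (f u) (f (-v)) ≥ min (f x) (f y)`. Backward: `y - z ∈ 1 ∘ y + (-1) ∘ z`
gives `min (f y) (f z) ≤ f (y - z)`, and for `r ∈ b ∘ y` we have `r + y ∈ b ∘ y + 1 ∘ y`, so
`f r = f ((r + y) - y) ≥ min (f (r + y)) (f y) ≥ f y`.
-/

theorem le_csInf_image_iff {α β : Type*} [ConditionallyCompleteLattice β] {f : α → β} {s : Set α}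
    {a : β} (hf : BddBelow (range f)) (hs : s.Nonempty) :
    a ≤ sInf (f '' s) ↔ ∀ x ∈ s, a ≤ f x := by
  rw [le_csInf_iff (hf.mono (image_subset_range f s)) (hs.image f), forall_mem_image]

namespace HVS

variable {β : Type*} [Field K] [AddCommGroup V] (H : HVS K V)

theorem neg_mem_ho_neg {b : K} {y t : V} (ht : t ∈ H.ho b y) : -t ∈ H.ho (-b) y := by
  rw [H.h4b]
  simpa using ht

theorem sub_mem_ho_one_add_ho_neg_one (y z : V) :
    y - z ∈ image2 (· + ·) (H.ho 1 y) (H.ho (-1) z) :=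
  ⟨y, H.h5 y, -z, H.neg_mem_ho_neg (H.h5 z), (sub_eq_add_neg y z).symm⟩

section LinearOrder

variable [LinearOrder β] {f : V → β}

theorem min_le_of_mem_ho_add_ho (hsub : ∀ y z, min (f y) (f z) ≤ f (y - z))
    (hho : ∀ b y, ∀ r ∈ H.ho b y, f y ≤ f r) {a b : K} {x y t : V}
    (ht : t ∈ image2 (· + ·) (H.ho a x) (H.ho b y)) : min (f x) (f y) ≤ f t := by
  obtain ⟨u, hu, v, hv, rfl⟩ := ht
  calc min (f x) (f y) ≤ min (f u) (f (-v)) :=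
        min_le_min (hho a x u hu) (hho (-b) y (-v) (H.neg_mem_ho_neg hv))
    _ ≤ f (u - -v) := hsub u (-v)
    _ = f (u + v) := by rw [sub_neg_eq_add]

section

variable (hlin : ∀ (x y : V) (a b : K), ∀ t ∈ image2 (· + ·) (H.ho a x) (H.ho b y),
  min (f x) (f y) ≤ f t)
include hlin

theorem min_le_sub_of_forall_mem_ho_add_ho (y z : V) : min (f y) (f z) ≤ f (y - z) :=
  hlin y z 1 (-1) (y - z) (H.sub_mem_ho_one_add_ho_neg_one y z)

theorem le_of_mem_ho_of_forall_mem_ho_add_ho {b : K} {y r : V} (hr : r ∈ H.ho b y) :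
    f y ≤ f r := by
  have hry : f y ≤ f (r + y) := min_self (f y) ▸ hlin y y b 1 _ ⟨r, hr, y, H.h5 y, rfl⟩
  calc f y ≤ min (f (r + y)) (f y) := le_min hry le_rfl
    _ ≤ f (r + y - y) := H.min_le_sub_of_forall_mem_ho_add_ho hlin _ _
    _ = f r := by rw [add_sub_cancel_right]

end

theorem forall_min_le_sub_and_forall_le_of_mem_ho_iff :
    ((∀ y z, min (f y) (f z) ≤ f (y - z)) ∧ ∀ b y, ∀ r ∈ H.ho b y, f y ≤ f r) ↔
      ∀ (x y : V) (a b : K), ∀ t ∈ image2 (· + ·) (H.ho a x) (H.ho b y), min (f x) (f y) ≤ f t :=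
  ⟨fun ⟨hsub, hho⟩ _ _ _ _ _ ht => H.min_le_of_mem_ho_add_ho hsub hho ht,
    fun hlin => ⟨H.min_le_sub_of_forall_mem_ho_add_ho hlin,
      fun _ _ _ hr => H.le_of_mem_ho_of_forall_mem_ho_add_ho hlin hr⟩⟩

end LinearOrder

theorem forall_min_le_sub_and_le_csInf_ho_iff [ConditionallyCompleteLinearOrder β] {f : V → β}
    (hf : BddBelow (range f)) :
    ((∀ y z, min (f y) (f z) ≤ f (y - z)) ∧ ∀ b y, f y ≤ sInf (f '' H.ho b y)) ↔
      ∀ (x y : V) (a b : K),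
        min (f x) (f y) ≤ sInf (f '' image2 (· + ·) (H.ho a x) (H.ho b y)) := by
  have hho b y := le_csInf_image_iff (a := f y) hf (H.ho_nonempty b y)
  have hlin x y a b := le_csInf_image_iff (a := min (f x) (f y)) hf
    ((H.ho_nonempty a x).image2 (f := (· + ·)) (H.ho_nonempty b y))
  simp only [hho, hlin]
  exact H.forall_min_le_sub_and_forall_le_of_mem_ho_iff

end HVS

theorem stmt_7_general [Field K] [AddCommGroup V] (H : HVS K V)
    (Gp Gm : E → V → ℝ) (hb : IsBFS Gp Gm) :
    IsBFSHVS H Gp Gm ↔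
      ∀ (e : E) (x y : V) (a b : K),
        min (Gp e x) (Gp e y) ≤
          sInf (Gp e '' Set.image2 (· + ·) (H.ho a x) (H.ho b y)) ∧
        sSup (Gm e '' Set.image2 (· + ·) (H.ho a x) (H.ho b y)) ≤
          max (Gm e x) (Gm e y) := by
  have hp e := H.forall_min_le_sub_and_le_csInf_ho_iff (f := Gp e)
    ⟨0, by rintro _ ⟨x, rfl⟩; exact (hb e x).1.1⟩
  have hm e := H.forall_min_le_sub_and_le_csInf_ho_iff (f := OrderDual.toDual ∘ Gm e)
    ⟨OrderDual.toDual 0, by rintro _ ⟨x, rfl⟩; exact (hb e x).2.2⟩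
  constructor
  · rintro ⟨hsubp, hsubm, hhop, hhom⟩ e x y a b
    exact ⟨(hp e).1 ⟨hsubp e, hhop e⟩ x y a b, (hm e).1 ⟨hsubm e, hhom e⟩ x y a b⟩
  · intro hlin
    have hp' e := (hp e).2 fun x y a b => (hlin e x y a b).1
    have hm' e := (hm e).2 fun x y a b => (hlin e x y a b).2
    exact ⟨fun e => (hp' e).1, fun e => (hm' e).1, fun e => (hp' e).2, fun e => (hm' e).2⟩

theorem stmt_7 [Field K] [AddCommGroup V] (H : HVS K V)
    (hsld : ∀ (b c : K) (y : V), H.ho (b + c) y = Set.image2 (· + ·) (H.ho b y) (H.ho c y))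
    (Gp Gm : E → V → ℝ) (hb : IsBFS Gp Gm) :
    IsBFSHVS H Gp Gm ↔
      ∀ (e : E) (x y : V) (a b : K),
        min (Gp e x) (Gp e y) ≤
          sInf (Gp e '' Set.image2 (· + ·) (H.ho a x) (H.ho b y)) ∧
        sSup (Gm e '' Set.image2 (· + ·) (H.ho a x) (H.ho b y)) ≤
          max (Gm e x) (Gm e y) :=
  stmt_7_general H Gp Gm hb
end

section
/- Let V be a hypervector space over K, X ⊆ V a nonempty subset, and B a nonempty parameter set. Define (H,B) by H_e^+(x) = 0 for all x, and H_e^-(x) = −1 if x ∈ X, H_e^-(x) = 0 otherwise. Then X is a subhyperspace of V if and only if (H,B) is a bipolar fuzzy soft hypervector space of V. -/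
open Set Classical

variable {K V E : Type*}

section IndicatorNegOne

variable {α : Type*} {X : Set α}

theorem indicator_neg_one_le_neg_one_iff {x : α} :
    X.indicator (fun _ => (-1:ℝ)) x ≤ -1 ↔ x ∈ X := by
  by_cases hx : x ∈ X <;> simp [hx]

theorem indicator_neg_one_nonpos (x : α) : X.indicator (fun _ => (-1:ℝ)) x ≤ 0 :=
  Set.indicator_nonpos (fun _ _ => by norm_num) x

theorem indicator_neg_one_sub_le_max_iff {G : Type*} [Sub G] {X : Set G} :
    (∀ y z : G, X.indicator (fun _ => (-1:ℝ)) (y - z) ≤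
        max (X.indicator (fun _ => (-1:ℝ)) y) (X.indicator (fun _ => (-1:ℝ)) z)) ↔
      ∀ x ∈ X, ∀ y ∈ X, x - y ∈ X := by
  refine ⟨fun h x hx y hy => ?_, fun h y z => ?_⟩
  · simpa [hx, hy, indicator_neg_one_le_neg_one_iff] using h x y
  · by_cases hy : y ∈ X
    · by_cases hz : z ∈ X
      · simp [hy, hz, h y hy z hz]
      · exact le_max_of_le_right ((indicator_neg_one_nonpos _).trans (by simp [hz]))
    · exact le_max_of_le_left ((indicator_neg_one_nonpos _).trans (by simp [hy]))

theorem sSup_image_indicator_neg_one_le_iff {S : Set α} (hS : S.Nonempty) (y : α) :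
    sSup (X.indicator (fun _ => (-1:ℝ)) '' S) ≤ X.indicator (fun _ => (-1:ℝ)) y ↔
      (y ∈ X → S ⊆ X) := by
  have hbdd : BddAbove (X.indicator (fun _ => (-1:ℝ)) '' S) :=
    ⟨0, Set.forall_mem_image.2 fun r _ => indicator_neg_one_nonpos r⟩
  refine ⟨fun h hy r hr => ?_, fun h => csSup_le (hS.image _) (Set.forall_mem_image.2 ?_)⟩
  · rw [← indicator_neg_one_le_neg_one_iff]
    calc X.indicator (fun _ => (-1:ℝ)) r ≤ sSup (X.indicator (fun _ => (-1:ℝ)) '' S) :=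
          le_csSup hbdd (Set.mem_image_of_mem _ hr)
      _ ≤ -1 := by simpa [hy] using h
  · intro r hr
    by_cases hy : y ∈ X
    · simp [hy, h hy hr]
    · simpa [hy] using indicator_neg_one_nonpos r

end IndicatorNegOne

theorem stmt_10_general [Field K] [AddCommGroup V] [Nonempty E] (H : HVS K V)
    (X : Set V) :
    IsSHS H X ↔
      IsBFSHVS H (fun (_ : E) (_ : V) => (0:ℝ))
        (fun (_ : E) (x : V) => X.indicator (fun _ => (-1:ℝ)) x) := by
  have hpos (b : K) (y : V) : (0:ℝ) ≤ sInf ((fun _ : V => (0:ℝ)) '' H.ho b y) := by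
    rw [(H.ho_nonempty b y).image_const, csInf_singleton]
  simp only [IsBFSHVS, IsSHS, min_self, le_refl, implies_true, hpos, true_and, forall_const,
    indicator_neg_one_sub_le_max_iff, sSup_image_indicator_neg_one_le_iff (H.ho_nonempty _ _)]
  exact and_congr_right' ⟨fun h b y hy => h y hy b, fun h y hy b => h b y hy⟩

theorem stmt_10 [Field K] [AddCommGroup V] [Nonempty E] (H : HVS K V)
    (X : Set V) (hX : X.Nonempty) :
    IsSHS H X ↔
      IsBFSHVS H (fun (_ : E) (_ : V) => (0:ℝ))
        (fun (_ : E) (x : V) => X.indicator (fun _ => (-1:ℝ)) x) :=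
  stmt_10_general H X
end
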